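/- Suppose F : [0,∞)² → ℝ and H : [0,∞) → ℝ are continuous with H(0) = 0, condition (A5) holds with constants K₁, K₂, K₃ and function F₂, and in addition F₂(v) ≤ K₄ for all v ≥ 0, where K₄ > 0 (condition (A6a)). If (u, v) is a nonnegative classical solution of the steady-state system (S) on a bounded open set Ω ⊂ ℝⁿ with zero Dirichlet boundary values, then 0 ≤ u(x) ≤ K₄/K₁ and 0 ≤ v(x) ≤ H** for all x ∈ Ω, where H** = max_{0 ≤ s ≤ K₄/K₁} H(s). -/

import Mathlib

/-!
At an interior maximum of a `C²` function every pure second derivative, hence the Laplacian,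
is `≤ 0`: restrict to a line and use the second-derivative test. As `closure Ω` is compact, `u`
attains its maximum there. On the boundary `u = 0`; at an interior maximum the first equation
gives `F(u, v) ≥ 0`, so `K₁ u ≤ F₂(v) ≤ K₄`. The same argument applied to `v` and the second
equation gives `v ≤ H(u) ≤ H**` at an interior maximum, using the bound on `u` just obtained.
-/

open Set

/-- The Laplacian of `f` at `x`: the trace of the second derivative. -/
noncomputable def Lap {n : ℕ} (f : EuclideanSpace ℝ (Fin n) → ℝ)
    (x : EuclideanSpace ℝ (Fin n)) : ℝ :=
  ∑ i : Fin n, iteratedFDeriv ℝ 2 f x ![EuclideanSpace.single i (1 : ℝ), EuclideanSpace.single i 1]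

open Filter Topology

lemma IsLocalMax.deriv_deriv_nonpos {g : ℝ → ℝ} {a : ℝ} (h : IsLocalMax g a)
    (hc : ContinuousAt g a) : deriv (deriv g) a ≤ 0 := by
  by_contra! hpos
  -- A local max that is also a local min is locally constant, so its second derivative is `0`.
  have hmin : IsLocalMin g a := isLocalMin_of_deriv_deriv_pos hpos h.deriv_eq_zero hc
  have hconst : g =ᶠ[𝓝 a] fun _ ↦ g a :=
    (hmin.and h).mono fun _ hx ↦ le_antisymm hx.2 hx.1
  have hderiv : deriv g =ᶠ[𝓝 a] fun _ ↦ 0 := by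
    simpa using hconst.deriv
  rw [hderiv.deriv_eq, deriv_const] at hpos
  exact lt_irrefl _ hpos

variable {E F : Type*} [NormedAddCommGroup E] [NormedSpace ℝ E]
  [NormedAddCommGroup F] [NormedSpace ℝ F]

lemma deriv_deriv_comp_add_smul {f : E → F} {x : E} (hf : ContDiffAt ℝ 2 f x) (w : E) :
    deriv (deriv fun t : ℝ ↦ f (x + t • w)) 0 = iteratedFDeriv ℝ 2 f x ![w, w] := by
  have hline : ∀ t : ℝ, HasDerivAt (fun t : ℝ ↦ x + t • w) w t := fun t ↦ by
    simpa using ((hasDerivAt_id t).smul_const w).const_add x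
  have hline0 : Tendsto (fun t : ℝ ↦ x + t • w) (𝓝 0) (𝓝 x) := by
    simpa using (hline 0).continuousAt.tendsto
  have hderiv : deriv (fun t : ℝ ↦ f (x + t • w)) =ᶠ[𝓝 0] fun t ↦ fderiv ℝ f (x + t • w) w := by
    filter_upwards [hline0.eventually (hf.eventually (by simp))] with t ht
    exact (((ht.differentiableAt two_ne_zero).hasFDerivAt).comp_hasDerivAt t (hline t)).deriv
  have hfd : DifferentiableAt ℝ (fderiv ℝ f) x :=
    (hf.fderiv_right one_add_one_eq_two.le).differentiableAt one_ne_zero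
  have hsecond : HasDerivAt (fun t : ℝ ↦ fderiv ℝ f (x + t • w) w)
      (fderiv ℝ (fderiv ℝ f) x w w) 0 := by
    have happly : HasFDerivAt (fun y ↦ fderiv ℝ f y w)
        ((ContinuousLinearMap.apply ℝ F w).comp (fderiv ℝ (fderiv ℝ f) x)) (x + (0 : ℝ) • w) := by
      rw [zero_smul, add_zero]
      exact (ContinuousLinearMap.apply ℝ F w).hasFDerivAt.comp x hfd.hasFDerivAt
    exact happly.comp_hasDerivAt (0 : ℝ) (hline 0)
  rw [hderiv.deriv_eq, hsecond.deriv, iteratedFDeriv_two_apply]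
  rfl

lemma IsLocalMax.iteratedFDeriv_two_nonpos {f : E → ℝ} {x : E} (h : IsLocalMax f x)
    (hf : ContDiffAt ℝ 2 f x) (w : E) : iteratedFDeriv ℝ 2 f x ![w, w] ≤ 0 := by
  have hline : ContinuousAt (fun t : ℝ ↦ x + t • w) 0 := by fun_prop
  rw [← deriv_deriv_comp_add_smul hf w]
  rw [← show x + (0 : ℝ) • w = x by simp] at h hf
  exact IsLocalMax.deriv_deriv_nonpos (h.comp_continuous (g := fun t : ℝ ↦ x + t • w) hline)
    (hf.continuousAt.comp (f := fun t : ℝ ↦ x + t • w) hline)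

lemma IsLocalMax.lap_nonpos {n : ℕ} {f : EuclideanSpace ℝ (Fin n) → ℝ}
    {x : EuclideanSpace ℝ (Fin n)} (h : IsLocalMax f x) (hf : ContDiffAt ℝ 2 f x) :
    Lap f x ≤ 0 :=
  Finset.sum_nonpos fun _ _ ↦ h.iteratedFDeriv_two_nonpos hf _

lemma le_of_frontier_le_of_lap_nonpos_imp_le {n : ℕ} {Ω : Set (EuclideanSpace ℝ (Fin n))}
    (hΩo : IsOpen Ω) (hΩb : Bornology.IsBounded Ω) {w : EuclideanSpace ℝ (Fin n) → ℝ}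
    (hwc : ContinuousOn w (closure Ω)) (hw2 : ContDiffOn ℝ 2 w Ω) {M : ℝ}
    (hfrontier : ∀ x ∈ frontier Ω, w x ≤ M) (hinterior : ∀ x ∈ Ω, Lap w x ≤ 0 → w x ≤ M) :
    ∀ x ∈ Ω, w x ≤ M := by
  intro x hx
  obtain ⟨x₀, hx₀, hmax⟩ :=
    hΩb.isCompact_closure.exists_isMaxOn ⟨x, subset_closure hx⟩ hwc
  refine (hmax (subset_closure hx)).trans ?_
  by_cases hx₀Ω : x₀ ∈ Ω
  · have hΩ : Ω ∈ 𝓝 x₀ := hΩo.mem_nhds hx₀Ω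
    have hloc : IsLocalMax w x₀ := hmax.isLocalMax (mem_of_superset hΩ subset_closure)
    exact hinterior x₀ hx₀Ω (hloc.lap_nonpos (hw2.contDiffAt hΩ))
  · exact hfrontier x₀ (hΩo.frontier_eq ▸ ⟨hx₀, hx₀Ω⟩)

theorem stmt8_general {n : ℕ} (Ω : Set (EuclideanSpace ℝ (Fin n)))
    (hΩo : IsOpen Ω) (hΩb : Bornology.IsBounded Ω)
    (d τ : ℝ) (hd : 0 < d) (hτ : 0 < τ)
    (F : ℝ → ℝ → ℝ) (H : ℝ → ℝ)
    (hH0 : H 0 = 0)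
    -- condition (A5)
    (K₁ : ℝ) (hK₁ : 0 < K₁)
    (F₂ : ℝ → ℝ)
    (hFle : ∀ u ≥ (0:ℝ), ∀ v ≥ (0:ℝ), F u v ≤ -K₁ * u + F₂ v)
    -- condition (A6a)
    (K₄ : ℝ) (hK₄ : 0 < K₄) (hF₂bd : ∀ v ≥ (0:ℝ), F₂ v ≤ K₄)
    -- (u, v) nonnegative classical solution of (S)
    (u v : EuclideanSpace ℝ (Fin n) → ℝ)
    (huc : ContinuousOn u (closure Ω)) (hvc : ContinuousOn v (closure Ω))
    (hu2 : ContDiffOn ℝ 2 u Ω) (hv2 : ContDiffOn ℝ 2 v Ω)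
    (hub : ∀ x ∈ frontier Ω, u x = 0) (hvb : ∀ x ∈ frontier Ω, v x = 0)
    (hun : ∀ x ∈ Ω, 0 ≤ u x) (hvn : ∀ x ∈ Ω, 0 ≤ v x)
    (heq1 : ∀ x ∈ Ω, d * Lap u x + F (u x) (v x) = 0)
    (heq2 : ∀ x ∈ Ω, d * Lap v x + (1 / τ) * (H (u x) - v x) = 0)
    -- H** = max of H on [0, K₄/K₁]
    (Hss : ℝ) (hHss : IsGreatest (H '' Icc 0 (K₄ / K₁)) Hss) :
    ∀ x ∈ Ω, 0 ≤ u x ∧ u x ≤ K₄ / K₁ ∧ 0 ≤ v x ∧ v x ≤ Hss := by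
  have hK : 0 ≤ K₄ / K₁ := (div_pos hK₄ hK₁).le
  have hu : ∀ x ∈ Ω, u x ≤ K₄ / K₁ := by
    refine le_of_frontier_le_of_lap_nonpos_imp_le hΩo hΩb huc hu2
      (fun x hx ↦ (hub x hx).symm ▸ hK) fun x hx hlap ↦ ?_
    have hF : 0 ≤ F (u x) (v x) := by nlinarith [heq1 x hx]
    have hFx := hFle (u x) (hun x hx) (v x) (hvn x hx)
    rw [le_div_iff₀ hK₁]
    linarith [hF₂bd (v x) (hvn x hx)]
  have hHss_nonneg : 0 ≤ Hss := hH0 ▸ hHss.2 ⟨0, ⟨le_rfl, hK⟩, rfl⟩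
  have hv : ∀ x ∈ Ω, v x ≤ Hss := by
    refine le_of_frontier_le_of_lap_nonpos_imp_le hΩo hΩb hvc hv2
      (fun x hx ↦ (hvb x hx).symm ▸ hHss_nonneg) fun x hx hlap ↦ ?_
    have hvH : v x ≤ H (u x) := by
      have : 0 ≤ (1 / τ) * (H (u x) - v x) := by nlinarith [heq2 x hx]
      exact sub_nonneg.mp ((mul_nonneg_iff_of_pos_left (one_div_pos.mpr hτ)).mp this)
    exact hvH.trans (hHss.2 ⟨u x, ⟨hun x hx, hu x hx⟩, rfl⟩)
  exact fun x hx ↦ ⟨hun x hx, hu x hx, hvn x hx, hv x hx⟩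

/-- a priori bounds for nonnegative classical solutions of (S) under
conditions (A5) and (A6a): 0 ≤ u ≤ K₄/K₁ and 0 ≤ v ≤ H** = max_{[0, K₄/K₁]} H. -/
theorem stmt8 {n : ℕ} (Ω : Set (EuclideanSpace ℝ (Fin n)))
    (hΩo : IsOpen Ω) (hΩb : Bornology.IsBounded Ω)
    (d τ : ℝ) (hd : 0 < d) (hτ : 0 < τ)
    (F : ℝ → ℝ → ℝ) (H : ℝ → ℝ)
    (hFc : ContinuousOn (Function.uncurry F) (Ici 0 ×ˢ Ici 0))
    (hHc : ContinuousOn H (Ici 0)) (hH0 : H 0 = 0)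
    -- condition (A5)
    (K₁ K₂ K₃ : ℝ) (hK₁ : 0 < K₁) (hK₂ : 0 < K₂) (hK₃ : 0 < K₃)
    (F₂ : ℝ → ℝ) (hF₂c : ContinuousOn F₂ (Ici 0))
    (hFle : ∀ u ≥ (0:ℝ), ∀ v ≥ (0:ℝ), F u v ≤ -K₁ * u + F₂ v)
    (hF₂le : ∀ v ≥ (0:ℝ), F₂ v ≤ K₂ * v)
    (hHle : ∀ u ≥ (0:ℝ), H u ≤ K₃ * u)
    -- condition (A6a)
    (K₄ : ℝ) (hK₄ : 0 < K₄) (hF₂bd : ∀ v ≥ (0:ℝ), F₂ v ≤ K₄)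
    -- (u, v) nonnegative classical solution of (S)
    (u v : EuclideanSpace ℝ (Fin n) → ℝ)
    (huc : ContinuousOn u (closure Ω)) (hvc : ContinuousOn v (closure Ω))
    (hu2 : ContDiffOn ℝ 2 u Ω) (hv2 : ContDiffOn ℝ 2 v Ω)
    (hub : ∀ x ∈ frontier Ω, u x = 0) (hvb : ∀ x ∈ frontier Ω, v x = 0)
    (hun : ∀ x ∈ Ω, 0 ≤ u x) (hvn : ∀ x ∈ Ω, 0 ≤ v x)
    (heq1 : ∀ x ∈ Ω, d * Lap u x + F (u x) (v x) = 0)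
    (heq2 : ∀ x ∈ Ω, d * Lap v x + (1 / τ) * (H (u x) - v x) = 0)
    -- H** = max of H on [0, K₄/K₁]
    (Hss : ℝ) (hHss : IsGreatest (H '' Icc 0 (K₄ / K₁)) Hss) :
    ∀ x ∈ Ω, 0 ≤ u x ∧ u x ≤ K₄ / K₁ ∧ 0 ≤ v x ∧ v x ≤ Hss :=
  stmt8_general Ω hΩo hΩb d τ hd hτ F H hH0 K₁ hK₁ F₂ hFle K₄ hK₄ hF₂bd u v huc hvc hu2 hv2 hub hvb
    hun hvn heq1 heq2 Hss hHss
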